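/- For positive integers n, l and parameters x, z, q with denominators nonzero: ∑_{i=1}^n [(x;q)_i (zq;q)_{i-1} q^i / (q;q)_i] · h_{l-1}(q^i/(1-zq^i), ..., q^n/(1-zq^n)) = [(zq;q)_n/(q;q)_n] · ∑_{i=1}^n [n choose i]_q (-1)^{i-1} q^{binom(i,2)+il} (1 - x^i)/(1 - zq^i)^l. -/

import Mathlib

noncomputable def qPoch (q a : ℝ) (n : ℕ) : ℝ := ∏ j ∈ Finset.range n, (1 - a * q ^ j)

noncomputable def qBinom (q : ℝ) (n r : ℕ) : ℝ :=
  if r ≤ n then qPoch q q n / (qPoch q q r * qPoch q q (n - r)) else 0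

/-- Complete homogeneous symmetric polynomial `h_k` of the entries of a list. -/
noncomputable def hPoly : List ℝ → ℕ → ℝ
  | _, 0 => 1
  | [], _ + 1 => 0
  | a :: as, k + 1 => a * hPoly (a :: as) k + hPoly as (k + 1)
termination_by l k => (l.length, k)

/-- The list `[f i, f (i+1), …, f n]`. -/
def varList (f : ℕ → ℝ) (i n : ℕ) : List ℝ := (List.range (n + 1 - i)).map fun j => f (i + j)

/-
Write `a j = q ^ j / (1 - z q ^ j)` and `c m = (zq; q)_m / (q; q)_m`. For `l = 1` the identity
follows by induction on `n` from the recurrences of the `q`-binomial coefficients, the new term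
`(x; q)_{n+1}` being expanded by the `q`-binomial theorem. For larger `l`, the recursion
`h_{k+1}(a_i, …, a_n) = ∑_{m ≥ i} a_m h_k(a_m, …, a_n)` and an exchange of summations rewrite
the sum as one of the same shape with `l` lowered by one and the `i`-th coefficient on the right
multiplied by `a i`; this works because `∑_{k=i}^{n} a k c k [k, i] = a i c n [n, i]`.
-/

open Finset

section QBinomial

variable {q : ℝ}

lemma qPoch_succ (q a : ℝ) (n : ℕ) : qPoch q a (n + 1) = qPoch q a n * (1 - a * q ^ n) :=
  prod_range_succ _ _

lemma qPoch_zero (q a : ℝ) : qPoch q a 0 = 1 := prod_range_zero _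

lemma qPoch_succ' (q a : ℝ) (n : ℕ) : qPoch q a (n + 1) = (1 - a) * qPoch q (a * q) n := by
  rw [qPoch, prod_range_succ', pow_zero, mul_one, mul_comm, qPoch]
  exact congrArg _ (prod_congr rfl fun j _ => by ring)

lemma qPoch_one_left (q : ℝ) {n : ℕ} (hn : n ≠ 0) : qPoch q 1 n = 0 := by
  obtain ⟨m, rfl⟩ := Nat.exists_eq_succ_of_ne_zero hn
  rw [qPoch_succ', sub_self, zero_mul]

lemma qPoch_self_succ (q : ℝ) (n : ℕ) : qPoch q q (n + 1) = qPoch q q n * (1 - q ^ (n + 1)) := by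
  rw [qPoch_succ, ← pow_succ']

lemma qPoch_mul_self_succ (q b : ℝ) (n : ℕ) :
    qPoch q (b * q) (n + 1) = qPoch q (b * q) n * (1 - b * q ^ (n + 1)) := by
  rw [qPoch_succ, mul_assoc, ← pow_succ']

lemma qPoch_self_ne_zero (hq : ∀ j : ℕ, 1 ≤ j → 1 - q ^ j ≠ 0) (n : ℕ) : qPoch q q n ≠ 0 :=
  prod_ne_zero_iff.mpr fun j _ => by rw [← pow_succ']; exact hq _ j.succ_pos

lemma qBinom_of_le {n r : ℕ} (h : r ≤ n) :
    qBinom q n r = qPoch q q n / (qPoch q q r * qPoch q q (n - r)) :=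
  if_pos h

lemma qBinom_of_lt {n r : ℕ} (h : n < r) : qBinom q n r = 0 :=
  if_neg h.not_ge

lemma qBinom_zero_right (hq : ∀ j : ℕ, 1 ≤ j → 1 - q ^ j ≠ 0) (n : ℕ) : qBinom q n 0 = 1 := by
  rw [qBinom_of_le n.zero_le, Nat.sub_zero, qPoch_zero, one_mul,
    div_self (qPoch_self_ne_zero hq n)]

lemma qBinom_self (hq : ∀ j : ℕ, 1 ≤ j → 1 - q ^ j ≠ 0) (n : ℕ) : qBinom q n n = 1 := by
  rw [qBinom_of_le le_rfl, Nat.sub_self, qPoch_zero, mul_one,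
    div_self (qPoch_self_ne_zero hq n)]

lemma qBinom_succ_mul (hq : ∀ j : ℕ, 1 ≤ j → 1 - q ^ j ≠ 0) {n i : ℕ} (h : i ≤ n + 1) :
    (1 - q ^ (n + 1 - i)) * qBinom q (n + 1) i = (1 - q ^ (n + 1)) * qBinom q n i := by
  obtain rfl | hin := h.eq_or_lt
  · rw [Nat.sub_self, pow_zero, sub_self, zero_mul, qBinom_of_lt n.lt_succ_self, mul_zero]
  obtain ⟨j, rfl⟩ := Nat.exists_eq_add_of_le (Nat.le_of_lt_succ hin)
  rw [qBinom_of_le hin.le, qBinom_of_le (Nat.le_add_right i j),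
    show i + j + 1 - i = j + 1 by omega, Nat.add_sub_cancel_left, qPoch_self_succ, qPoch_self_succ]
  have := qPoch_self_ne_zero hq i
  have := qPoch_self_ne_zero hq j
  have := hq (j + 1) j.succ_pos
  field_simp

lemma qBinom_succ_succ (hq : ∀ j : ℕ, 1 ≤ j → 1 - q ^ j ≠ 0) (m i : ℕ) :
    qBinom q (m + 1) (i + 1) = q ^ (i + 1) * qBinom q m (i + 1) + qBinom q m i := by
  rcases lt_trichotomy m i with hmi | rfl | hmi
  · rw [qBinom_of_lt (by omega), qBinom_of_lt (by omega), qBinom_of_lt hmi, mul_zero, add_zero]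
  · rw [qBinom_self hq, qBinom_self hq, qBinom_of_lt m.lt_succ_self, mul_zero, zero_add]
  obtain ⟨j, rfl⟩ := Nat.exists_eq_add_of_lt hmi
  rw [qBinom_of_le (by omega), qBinom_of_le (by omega), qBinom_of_le (by omega),
    show i + j + 1 + 1 - (i + 1) = j + 1 by omega, show i + j + 1 - (i + 1) = j by omega,
    show i + j + 1 - i = j + 1 by omega, qPoch_self_succ q (i + j + 1), qPoch_self_succ q j,
    qPoch_self_succ q i]
  have := qPoch_self_ne_zero hq i
  have := qPoch_self_ne_zero hq j
  have := hq (i + 1) i.succ_pos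
  have := hq (j + 1) j.succ_pos
  field_simp
  ring

lemma qPoch_ratio_succ (hq : ∀ j : ℕ, 1 ≤ j → 1 - q ^ j ≠ 0) (z : ℝ) (n : ℕ) :
    qPoch q (z * q) (n + 1) / qPoch q q (n + 1) * (1 - q ^ (n + 1)) =
      qPoch q (z * q) n / qPoch q q n * (1 - z * q ^ (n + 1)) := by
  have := qPoch_self_ne_zero hq n
  have := hq (n + 1) n.succ_pos
  rw [qPoch_mul_self_succ, qPoch_self_succ]
  field_simp

theorem qPoch_eq_sum_qBinom (hq : ∀ j : ℕ, 1 ≤ j → 1 - q ^ j ≠ 0) (m : ℕ) (t : ℝ) :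
    qPoch q t m =
      ∑ i ∈ range (m + 1), qBinom q m i * (-1) ^ i * q ^ (i * (i - 1) / 2) * t ^ i := by
  induction m generalizing t with
  | zero => simp [qPoch, qBinom_zero_right hq]
  | succ m ih =>
    set g : ℕ → ℝ := fun i => qBinom q m i * (-1) ^ i * q ^ (i * (i - 1) / 2) * (t * q) ^ i
    have pascal : ∀ i, qBinom q (m + 1) (i + 1) * (-1) ^ (i + 1) *
        q ^ ((i + 1) * (i + 1 - 1) / 2) * t ^ (i + 1) = g (i + 1) - t * g i := fun i => by
      simp only [g, Nat.triangle_succ, qBinom_succ_succ hq]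
      ring
    have shift : ∑ i ∈ range (m + 1), g (i + 1) = ∑ i ∈ range (m + 1), g i - 1 := by
      have := (sum_range_succ' g (m + 1)).symm.trans (sum_range_succ g (m + 1))
      simp only [g, qBinom_zero_right hq, qBinom_of_lt m.lt_succ_self] at this ⊢
      linarith
    rw [sum_range_succ', qPoch_succ', ih]
    simp only [pascal, sum_sub_distrib, ← mul_sum, shift, qBinom_zero_right hq]
    simp only [pow_zero, mul_one, zero_tsub, mul_zero, Nat.zero_div, g]
    ring

lemma qPoch_eq_sum_Icc_qBinom (hq : ∀ j : ℕ, 1 ≤ j → 1 - q ^ j ≠ 0) {m : ℕ} (hm : m ≠ 0)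
    (x : ℝ) :
    qPoch q x m =
      ∑ i ∈ Icc 1 m, qBinom q m i * (-1) ^ (i - 1) * q ^ (i * (i - 1) / 2) * (1 - x ^ i) := by
  have expand : ∀ t, qPoch q t m =
      1 + ∑ i ∈ Icc 1 m, qBinom q m i * (-1) ^ i * q ^ (i * (i - 1) / 2) * t ^ i := fun t => by
    rw [qPoch_eq_sum_qBinom hq, Nat.range_succ_eq_Icc_zero,
      ← insert_Icc_add_one_left_eq_Icc m.zero_le, sum_insert (by simp)]
    simp only [qBinom_zero_right hq, pow_zero, mul_one, zero_tsub, mul_zero, Nat.zero_div, zero_add]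
  rw [← sub_zero (qPoch q x m), ← qPoch_one_left q hm, expand, expand, add_sub_add_left_eq_sub,
    ← sum_sub_distrib]
  refine sum_congr rfl fun i hi => ?_
  obtain ⟨k, rfl⟩ : ∃ k, i = k + 1 := ⟨i - 1, by grind⟩
  simp only [Nat.add_sub_cancel, pow_succ, one_pow]
  ring

end QBinomial

section Weights

variable {q z : ℝ}

lemma qBinom_succ_mul_weight (hq : ∀ j : ℕ, 1 ≤ j → 1 - q ^ j ≠ 0)
    (hzq : ∀ j : ℕ, 1 ≤ j → 1 - z * q ^ j ≠ 0) {n i : ℕ} (hi : 1 ≤ i) (hin : i ≤ n + 1) :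
    (1 - z * q ^ (n + 1)) * qBinom q (n + 1) i * (q ^ i / (1 - z * q ^ i)) =
      (1 - q ^ (n + 1)) * qBinom q n i * (q ^ i / (1 - z * q ^ i)) +
        q ^ (n + 1) * qBinom q (n + 1) i := by
  have key := qBinom_succ_mul hq hin
  have split : q ^ (n + 1) = q ^ i * q ^ (n + 1 - i) := by
    rw [← pow_add, Nat.add_sub_cancel' hin]
  have := hzq i hi
  rw [split] at key ⊢
  field_simp
  linear_combination q ^ i * key

lemma sum_Icc_qPoch_eq_sum_qBinom (hq : ∀ j : ℕ, 1 ≤ j → 1 - q ^ j ≠ 0)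
    (hzq : ∀ j : ℕ, 1 ≤ j → 1 - z * q ^ j ≠ 0) (x : ℝ) (n : ℕ) :
    ∑ i ∈ Icc 1 n, qPoch q x i * qPoch q (z * q) (i - 1) * q ^ i / qPoch q q i =
      qPoch q (z * q) n / qPoch q q n * ∑ i ∈ Icc 1 n, qBinom q n i *
        ((-1) ^ (i - 1) * q ^ (i * (i - 1) / 2) * (1 - x ^ i) * (q ^ i / (1 - z * q ^ i))) := by
  induction n with
  | zero => simp
  | succ n ih =>
    set u : ℕ → ℝ := fun i => (-1) ^ (i - 1) * q ^ (i * (i - 1) / 2) * (1 - x ^ i)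
    have recurrence : (1 - z * q ^ (n + 1)) *
        ∑ i ∈ Icc 1 (n + 1), qBinom q (n + 1) i * (u i * (q ^ i / (1 - z * q ^ i))) =
        (1 - q ^ (n + 1)) * ∑ i ∈ Icc 1 n, qBinom q n i * (u i * (q ^ i / (1 - z * q ^ i))) +
          q ^ (n + 1) * qPoch q x (n + 1) := by
      have extend : ∑ i ∈ Icc 1 n, qBinom q n i * (u i * (q ^ i / (1 - z * q ^ i))) =
          ∑ i ∈ Icc 1 (n + 1), qBinom q n i * (u i * (q ^ i / (1 - z * q ^ i))) := by
        rw [sum_Icc_succ_top (Nat.le_add_left 1 n), qBinom_of_lt n.lt_succ_self, zero_mul,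
          add_zero]
      rw [qPoch_eq_sum_Icc_qBinom hq (Nat.add_one_ne_zero n), extend, mul_sum, mul_sum, mul_sum,
        ← sum_add_distrib]
      refine sum_congr rfl fun i hi => ?_
      rw [mem_Icc] at hi
      linear_combination u i * qBinom_succ_mul_weight hq hzq hi.1 hi.2
    have last_term : qPoch q x (n + 1) * qPoch q (z * q) (n + 1 - 1) * q ^ (n + 1) /
        qPoch q q (n + 1) * (1 - q ^ (n + 1)) =
        qPoch q (z * q) n / qPoch q q n * q ^ (n + 1) * qPoch q x (n + 1) := by
      have := qPoch_self_ne_zero hq n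
      have := hq (n + 1) n.succ_pos
      rw [Nat.add_sub_cancel, qPoch_self_succ]
      field_simp
    rw [sum_Icc_succ_top (Nat.le_add_left 1 n), ih]
    apply mul_right_cancel₀ (hq (n + 1) n.succ_pos)
    linear_combination last_term - (∑ i ∈ Icc 1 (n + 1), qBinom q (n + 1) i *
        (u i * (q ^ i / (1 - z * q ^ i)))) * qPoch_ratio_succ hq z n -
      qPoch q (z * q) n / qPoch q q n * recurrence

lemma sum_weight_mul_qBinom (hq : ∀ j : ℕ, 1 ≤ j → 1 - q ^ j ≠ 0)
    (hzq : ∀ j : ℕ, 1 ≤ j → 1 - z * q ^ j ≠ 0) {i n : ℕ} (hi : 1 ≤ i) (hin : i ≤ n) :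
    ∑ k ∈ Icc i n, q ^ k / (1 - z * q ^ k) * (qPoch q (z * q) k / qPoch q q k * qBinom q k i) =
      q ^ i / (1 - z * q ^ i) * (qPoch q (z * q) n / qPoch q q n * qBinom q n i) := by
  induction n, hin using Nat.le_induction with
  | base => rw [Icc_self, sum_singleton]
  | succ n hin ih =>
    rw [sum_Icc_succ_top (by omega), ih]
    have key := qBinom_succ_mul hq (Nat.le_succ_of_le hin)
    have split : q ^ (n + 1) = q ^ i * q ^ (n + 1 - i) := by rw [← pow_add]; congr 1; omega
    have hA : q ^ (n + 1) / (1 - z * q ^ (n + 1)) * (1 - z * q ^ (n + 1)) = q ^ (n + 1) :=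
      div_mul_cancel₀ _ (hzq _ n.succ_pos)
    have hB : q ^ i / (1 - z * q ^ i) * (1 - z * q ^ i) = q ^ i := div_mul_cancel₀ _ (hzq i hi)
    apply mul_right_cancel₀ (hq (n + 1) n.succ_pos)
    set Q := q ^ (n + 1)
    set s := q ^ (n + 1 - i)
    set a := q ^ i / (1 - z * q ^ i)
    set a' := Q / (1 - z * Q)
    set c := qPoch q (z * q) n / qPoch q q n
    set b := qBinom q (n + 1) i
    linear_combination -(a * c) * key + (a' - a) * b * qPoch_ratio_succ hq z n + c * b * hA -
      c * b * s * hB + c * b * (1 + a * z) * split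

end Weights

section CompleteHomogeneous

lemma hPoly_zero (L : List ℝ) : hPoly L 0 = 1 := by rw [hPoly]

lemma hPoly_nil_succ (k : ℕ) : hPoly [] (k + 1) = 0 := by rw [hPoly]

lemma hPoly_cons_succ (a : ℝ) (as : List ℝ) (k : ℕ) :
    hPoly (a :: as) (k + 1) = a * hPoly (a :: as) k + hPoly as (k + 1) := by rw [hPoly]

lemma varList_of_lt (f : ℕ → ℝ) {i n : ℕ} (h : n < i) : varList f i n = [] := by
  rw [varList, Nat.sub_eq_zero_of_le h, List.range_zero, List.map_nil]

lemma varList_of_le (f : ℕ → ℝ) {i n : ℕ} (h : i ≤ n) :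
    varList f i n = f i :: varList f (i + 1) n := by
  rw [varList, varList, show n + 1 - i = n + 1 - (i + 1) + 1 by omega, List.range_succ_eq_map]
  simp only [List.map_cons, List.map_map, Nat.add_zero, Function.comp_def, Nat.add_succ,
    Nat.succ_add]

theorem hPoly_varList_succ (f : ℕ → ℝ) (k : ℕ) {i n : ℕ} (h : i ≤ n + 1) :
    hPoly (varList f i n) (k + 1) = ∑ m ∈ Icc i n, f m * hPoly (varList f m n) k := by
  induction h using Nat.decreasingInduction with
  | self =>
    rw [varList_of_lt f n.lt_succ_self, hPoly_nil_succ, Icc_eq_empty_of_lt n.lt_succ_self,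
      sum_empty]
  | of_succ i hi ih =>
    have hin : i ≤ n := Nat.le_of_lt_succ hi
    rw [varList_of_le f hin, hPoly_cons_succ, ← varList_of_le f hin, ih,
      ← insert_Icc_add_one_left_eq_Icc hin, sum_insert (by simp)]

end CompleteHomogeneous

theorem sum_Icc_sum_Icc_comm {M : Type*} [AddCommMonoid M] (a n : ℕ) (F : ℕ → ℕ → M) :
    ∑ m ∈ Icc a n, ∑ i ∈ Icc a m, F m i = ∑ i ∈ Icc a n, ∑ m ∈ Icc i n, F m i :=
  sum_comm' fun m i => by simp only [mem_Icc]; omega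

theorem sum_mul_hPoly_varList {f : ℕ → ℝ} {B : ℕ → ℕ → ℝ}
    (hfB : ∀ i n, 1 ≤ i → i ≤ n → ∑ k ∈ Icc i n, f k * B k i = f i * B n i) (L : ℕ)
    (T v : ℕ → ℝ) (hTv : ∀ m, ∑ i ∈ Icc 1 m, T i = ∑ i ∈ Icc 1 m, B m i * v i) (n : ℕ) :
    ∑ i ∈ Icc 1 n, T i * hPoly (varList f i n) L = ∑ i ∈ Icc 1 n, B n i * v i * f i ^ L := by
  induction L generalizing T v n with
  | zero =>
    simp only [hPoly_zero, pow_zero, mul_one]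
    exact hTv n
  | succ L ih =>
    have regroup : ∑ i ∈ Icc 1 n, T i * hPoly (varList f i n) (L + 1) =
        ∑ m ∈ Icc 1 n, (f m * ∑ i ∈ Icc 1 m, T i) * hPoly (varList f m n) L := calc
      _ = ∑ i ∈ Icc 1 n, ∑ m ∈ Icc i n, T i * (f m * hPoly (varList f m n) L) :=
        sum_congr rfl fun i hi => by rw [hPoly_varList_succ f L (by grind), mul_sum]
      _ = ∑ m ∈ Icc 1 n, ∑ i ∈ Icc 1 m, T i * (f m * hPoly (varList f m n) L) :=
        (sum_Icc_sum_Icc_comm 1 n _).symm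
      _ = _ := sum_congr rfl fun m _ => by rw [← sum_mul]; ring
    have hTv' : ∀ M, ∑ m ∈ Icc 1 M, f m * ∑ i ∈ Icc 1 m, T i =
        ∑ i ∈ Icc 1 M, B M i * (v i * f i) := fun M => calc
      _ = ∑ m ∈ Icc 1 M, ∑ i ∈ Icc 1 m, f m * B m i * v i := by
        simp only [hTv, mul_sum, mul_assoc]
      _ = ∑ i ∈ Icc 1 M, ∑ m ∈ Icc i M, f m * B m i * v i := sum_Icc_sum_Icc_comm 1 M _
      _ = _ := sum_congr rfl fun i hi => by
        rw [mem_Icc] at hi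
        rw [← sum_mul, hfB i M hi.1 hi.2]
        ring
    rw [regroup, ih _ _ hTv' n]
    exact sum_congr rfl fun i _ => by ring

theorem cor32a_general (q z x : ℝ) (n l : ℕ) (hl : 0 < l)
    (hden1 : ∀ j : ℕ, 1 ≤ j → 1 - q ^ j ≠ 0)
    (hden2 : ∀ j : ℕ, 1 ≤ j → 1 - z * q ^ j ≠ 0) :
    (∑ i ∈ Finset.Icc 1 n,
        qPoch q x i * qPoch q (z * q) (i - 1) * q ^ i / qPoch q q i *
          hPoly (varList (fun j => q ^ j / (1 - z * q ^ j)) i n) (l - 1)) =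
      qPoch q (z * q) n / qPoch q q n *
        ∑ i ∈ Finset.Icc 1 n,
          qBinom q n i * (-1) ^ (i - 1) * q ^ (i * (i - 1) / 2 + i * l) * (1 - x ^ i) /
            (1 - z * q ^ i) ^ l := by
  obtain ⟨L, rfl⟩ : ∃ L, l = L + 1 := ⟨l - 1, by omega⟩
  have base : ∀ m, ∑ i ∈ Icc 1 m, qPoch q x i * qPoch q (z * q) (i - 1) * q ^ i / qPoch q q i =
      ∑ i ∈ Icc 1 m, qPoch q (z * q) m / qPoch q q m * qBinom q m i *
        ((-1) ^ (i - 1) * q ^ (i * (i - 1) / 2) * (1 - x ^ i) * (q ^ i / (1 - z * q ^ i))) :=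
    fun m => by
      rw [sum_Icc_qPoch_eq_sum_qBinom hden1 hden2 x m, mul_sum]
      simp only [mul_assoc]
  rw [Nat.add_sub_cancel, sum_mul_hPoly_varList
    (fun i n hi hin => sum_weight_mul_qBinom hden1 hden2 hi hin) L _ _ base n, mul_sum]
  refine sum_congr rfl fun i hi => ?_
  have := hden2 i (mem_Icc.mp hi).1
  rw [pow_add, pow_mul, div_pow]
  field_simp
  ring

/-- Corollary 3.2(a). -/
theorem cor32a (q z x : ℝ) (n l : ℕ) (hn : 0 < n) (hl : 0 < l)
    (hden1 : ∀ j : ℕ, 1 ≤ j → 1 - q ^ j ≠ 0)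
    (hden2 : ∀ j : ℕ, 1 ≤ j → 1 - z * q ^ j ≠ 0) :
    (∑ i ∈ Finset.Icc 1 n,
        qPoch q x i * qPoch q (z * q) (i - 1) * q ^ i / qPoch q q i *
          hPoly (varList (fun j => q ^ j / (1 - z * q ^ j)) i n) (l - 1)) =
      qPoch q (z * q) n / qPoch q q n *
        ∑ i ∈ Finset.Icc 1 n,
          qBinom q n i * (-1) ^ (i - 1) * q ^ (i * (i - 1) / 2 + i * l) * (1 - x ^ i) /
            (1 - z * q ^ i) ^ l :=
  cor32a_general q z x n l hl hden1 hden2
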